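/- arXiv:1202.3399 — 2 statements merged into one kernel-verified Lean document; each statement's English description precedes it below -/
import Mathlib

section
/- If W₁ and W₂ are real matrices with the same number of columns and W₁ᵀW₁ = W₂ᵀW₂, then for any strategy matrix A with W₁ A⁺ A = W₁ we also have W₂ A⁺ A = W₂, and ‖W₁ A⁺‖_F = ‖W₂ A⁺‖_F. -/
open Matrix

/-- `Ap` is the Moore–Penrose pseudoinverse of `A`. -/
def IsMoorePenrose {m n : ℕ} (A : Matrix (Fin m) (Fin n) ℝ)
    (Ap : Matrix (Fin n) (Fin m) ℝ) : Prop :=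
  A * Ap * A = A ∧ Ap * A * Ap = Ap ∧ (A * Ap)ᵀ = A * Ap ∧ (Ap * A)ᵀ = Ap * A

/-- The Frobenius norm `‖M‖_F = sqrt (trace (Mᵀ M))`. -/
noncomputable def frobNorm {m n : ℕ} (M : Matrix (Fin m) (Fin n) ℝ) : ℝ :=
  Real.sqrt (Mᵀ * M).trace

/-! Both conclusions depend on `W` only through its Gram matrix `WᵀW`: the strategy condition
says `W (1 - A⁺A) = 0`, and `W B = 0 ↔ WᵀW B = 0`; the squared Frobenius norm of `W A⁺` is the
trace of `(A⁺)ᵀ (WᵀW) A⁺`. -/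

section Gram

variable {R : Type*} {m₁ m₂ n p : Type*} [Fintype n]

theorem mul_eq_zero_iff_of_conjTranspose_mul_self_eq [NonUnitalRing R] [PartialOrder R]
    [StarRing R] [StarOrderedRing R] [NoZeroDivisors R] [Fintype m₁] [Fintype m₂]
    {W₁ : Matrix m₁ n R} {W₂ : Matrix m₂ n R}
    (hW : W₁ᴴ * W₁ = W₂ᴴ * W₂) (B : Matrix n p R) : W₁ * B = 0 ↔ W₂ * B = 0 := by
  rw [← conjTranspose_mul_self_mul_eq_zero, hW, conjTranspose_mul_self_mul_eq_zero]

theorem mul_eq_self_iff_mul_one_sub_eq_zero [Ring R] [DecidableEq n] {W : Matrix m₁ n R}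
    {P : Matrix n n R} : W * P = W ↔ W * (1 - P) = 0 := by
  rw [Matrix.mul_sub, Matrix.mul_one, sub_eq_zero, eq_comm]

theorem transpose_mul_mul_self_eq [CommSemiring R] [Fintype m₁] (W : Matrix m₁ n R)
    (X : Matrix n p R) : (W * X)ᵀ * (W * X) = Xᵀ * (Wᵀ * W) * X := by
  simp only [transpose_mul, Matrix.mul_assoc]

end Gram

theorem frobNorm_mul_eq_of_transpose_mul_self_eq {m₁ m₂ n p : ℕ}
    {W₁ : Matrix (Fin m₁) (Fin n) ℝ} {W₂ : Matrix (Fin m₂) (Fin n) ℝ}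
    (hW : W₁ᵀ * W₁ = W₂ᵀ * W₂) (X : Matrix (Fin n) (Fin p) ℝ) :
    frobNorm (W₁ * X) = frobNorm (W₂ * X) := by
  rw [frobNorm, frobNorm, transpose_mul_mul_self_eq, transpose_mul_mul_self_eq, hW]

theorem equiv_workloads_strategy_general {m₁ m₂ n p : ℕ}
    (W₁ : Matrix (Fin m₁) (Fin n) ℝ) (W₂ : Matrix (Fin m₂) (Fin n) ℝ)
    (hW : W₁ᵀ * W₁ = W₂ᵀ * W₂)
    (A : Matrix (Fin p) (Fin n) ℝ) (Ap : Matrix (Fin n) (Fin p) ℝ)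
    (h₁ : W₁ * Ap * A = W₁) :
    W₂ * Ap * A = W₂ ∧ frobNorm (W₁ * Ap) = frobNorm (W₂ * Ap) := by
  have hW' : W₁ᴴ * W₁ = W₂ᴴ * W₂ := by
    simpa only [conjTranspose_eq_transpose_of_trivial] using hW
  refine ⟨?_, frobNorm_mul_eq_of_transpose_mul_self_eq hW Ap⟩
  rw [Matrix.mul_assoc, mul_eq_self_iff_mul_one_sub_eq_zero] at h₁ ⊢
  exact (mul_eq_zero_iff_of_conjTranspose_mul_self_eq hW' _).mp h₁

/-- If `W₁ᵀW₁ = W₂ᵀW₂` then any strategy representing `W₁` also represents `W₂`,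
with equal Frobenius norms `‖W₁ A⁺‖_F = ‖W₂ A⁺‖_F`. -/
theorem equiv_workloads_strategy {m₁ m₂ n p : ℕ}
    (W₁ : Matrix (Fin m₁) (Fin n) ℝ) (W₂ : Matrix (Fin m₂) (Fin n) ℝ)
    (hW : W₁ᵀ * W₁ = W₂ᵀ * W₂)
    (A : Matrix (Fin p) (Fin n) ℝ) (Ap : Matrix (Fin n) (Fin p) ℝ)
    (hAp : IsMoorePenrose A Ap) (h₁ : W₁ * Ap * A = W₁) :
    W₂ * Ap * A = W₂ ∧ frobNorm (W₁ * Ap) = frobNorm (W₂ * Ap) :=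
  equiv_workloads_strategy_general W₁ W₂ hW A Ap h₁
end

section
/- Let W₁ (m₁×n) and W₂ (m₂×n) be real matrices with W₂ᵀW₂ − W₁ᵀW₁ positive semidefinite. Then the sum of the singular values of W₁ is at most the sum of the singular values of W₂, i.e., trace(√(W₁ᵀW₁)) ≤ trace(√(W₂ᵀW₂)). -/
/-! Write `S = √(W₁ᵀW₁)` and `R = √(W₂ᵀW₂)`, so the hypothesis says `S² ≤ R²` in the Loewner
order. For positive definite `T` with `S² ≤ T²`, the matrix
`(T - S)² + (T² - S²) = 2T² - TS - ST` is positive semidefinite, hence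
`0 ≤ tr (T⁻¹ (2T² - TS - ST)) = 2 (tr T - tr S)`, since the trace of a product of two positive
semidefinite matrices is nonnegative. Taking `T = R + ε • 1` and letting `ε → 0` gives
`tr S ≤ tr R`. -/

open Matrix

/-- The positive semidefinite square root of a positive semidefinite matrix
(the definition `Matrix.PosSemidef.sqrt` of the older Mathlib, removed since). -/
noncomputable def Matrix.PosSemidef.sqrt {𝕜 : Type*} [RCLike 𝕜] [PartialOrder 𝕜] [StarOrderedRing 𝕜] {n : Type*}
    [Fintype n] [DecidableEq n] {A : Matrix n n 𝕜} (hA : A.PosSemidef) : Matrix n n 𝕜 :=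
  (hA.1.eigenvectorUnitary : Matrix n n 𝕜) *
    diagonal (((↑) : ℝ → 𝕜) ∘ (√·) ∘ hA.1.eigenvalues) *
    (star hA.1.eigenvectorUnitary : Matrix n n 𝕜)

open scoped MatrixOrder

namespace Matrix

variable {n : Type*} [Fintype n] [DecidableEq n]

lemma PosSemidef.sqrt_eq_cfcSqrt {A : Matrix n n ℝ} (hA : A.PosSemidef) :
    hA.sqrt = CFC.sqrt A := by
  rw [CFC.sqrt_eq_real_sqrt A hA.nonneg, cfcₙ_eq_cfc, hA.1.cfc_eq]
  rfl

lemma PosSemidef.trace_mul_nonneg {P Q : Matrix n n ℝ} (hP : P.PosSemidef) (hQ : Q.PosSemidef) :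
    0 ≤ (P * Q).trace := by
  obtain ⟨B, rfl⟩ := CStarAlgebra.nonneg_iff_eq_star_mul_self.mp hP.nonneg
  rw [Matrix.mul_assoc, trace_mul_comm, star_eq_conjTranspose]
  exact (hQ.mul_mul_conjTranspose_same B).trace_nonneg

lemma trace_le_trace_of_mul_self_le_of_posDef {S T : Matrix n n ℝ} (hS : 0 ≤ S) (hT : T.PosDef)
    (h : S * S ≤ T * T) : S.trace ≤ T.trace := by
  have hX : ((T - S)ᴴ * (T - S) + (T * T - S * S)).PosSemidef :=
    (posSemidef_conjTranspose_mul_self _).add h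
  have hX_eq : (T - S)ᴴ * (T - S) + (T * T - S * S) = T * (2 • T - S) - S * T := by
    rw [conjTranspose_sub, hT.1.eq, hS.posSemidef.1.eq]
    noncomm_ring
  have hdet : IsUnit T.det := hT.det_pos.ne'.isUnit
  have htr : (T⁻¹ * (T * (2 • T - S) - S * T)).trace = 2 * (T.trace - S.trace) := by
    rw [Matrix.mul_sub, ← Matrix.mul_assoc, nonsing_inv_mul T hdet, Matrix.one_mul, trace_sub,
      ← Matrix.mul_assoc, trace_mul_cycle, mul_nonsing_inv T hdet, Matrix.one_mul, trace_sub,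
      trace_smul, nsmul_eq_mul]
    ring
  have := hT.inv.posSemidef.trace_mul_nonneg hX
  rw [hX_eq, htr] at this
  linarith

lemma trace_le_trace_of_mul_self_le {S R : Matrix n n ℝ} (hS : 0 ≤ S) (hR : 0 ≤ R)
    (h : S * S ≤ R * R) : S.trace ≤ R.trace := by
  refine le_of_forall_pos_le_add fun δ hδ => ?_
  set ε := δ / (Fintype.card n + 1)
  have hε : 0 < ε := by positivity
  have hT : (R + ε • 1).PosDef := PosDef.posSemidef_add hR.posSemidef (PosDef.one.smul hε)
  have hTT : (R + ε • 1) * (R + ε • 1) = R * R + ((2 * ε) • R + (ε * ε) • 1) := by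
    simp only [add_mul, mul_add, Matrix.smul_mul, Matrix.mul_smul, Matrix.one_mul, Matrix.mul_one,
      smul_smul]
    module
  have hST := trace_le_trace_of_mul_self_le_of_posDef hS hT <| hTT ▸ le_add_of_le_of_nonneg h
    (add_nonneg (smul_nonneg (by positivity) hR) (smul_nonneg (by positivity) zero_le_one))
  have hεn : ε * Fintype.card n ≤ δ := by
    rw [div_mul_eq_mul_div, div_le_iff₀ (by positivity)]
    nlinarith
  rw [trace_add, trace_smul, trace_one, smul_eq_mul] at hST
  linarith

lemma trace_sqrt_le_trace_sqrt {A B : Matrix n n ℝ} (hA : 0 ≤ A) (hAB : A ≤ B) :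
    (CFC.sqrt A).trace ≤ (CFC.sqrt B).trace := by
  refine trace_le_trace_of_mul_self_le (CFC.sqrt_nonneg A) (CFC.sqrt_nonneg B) ?_
  rwa [CFC.sqrt_mul_sqrt_self A, CFC.sqrt_mul_sqrt_self B (hA.trans hAB)]

end Matrix

/-- If `W₂ᵀW₂ − W₁ᵀW₁` is positive semidefinite, then the sum of the singular values of `W₁`
is at most that of `W₂`: `trace √(W₁ᵀW₁) ≤ trace √(W₂ᵀW₂)`. -/
theorem sum_singular_values_mono {m₁ m₂ n : ℕ}
    (W₁ : Matrix (Fin m₁) (Fin n) ℝ) (W₂ : Matrix (Fin m₂) (Fin n) ℝ)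
    (h₁ : (W₁ᵀ * W₁).PosSemidef) (h₂ : (W₂ᵀ * W₂).PosSemidef)
    (hle : (W₂ᵀ * W₂ - W₁ᵀ * W₁).PosSemidef) :
    h₁.sqrt.trace ≤ h₂.sqrt.trace := by
  rw [h₁.sqrt_eq_cfcSqrt, h₂.sqrt_eq_cfcSqrt]
  exact trace_sqrt_le_trace_sqrt h₁.nonneg hle
end
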